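/- Let H be a real Hilbert space and T : H → H be Lipschitz continuous with constant L and strongly monotone with constant m > 0 (i.e., ⟨T u - T v, u - v⟩ ≥ m·‖u - v‖² for all u, v). Then T is bijective and its inverse T⁻¹ : H → H is Lipschitz continuous with constant 1/m. -/

import Mathlib

/-!
Strong monotonicity and Cauchy–Schwarz give `m‖u - v‖ ≤ ‖T u - T v‖`, which yields injectivity
and the `1/m` bound on the inverse. For surjectivity, solving `T x = y` is the fixed-point problem
for `x ↦ x - θ (T x - y)`; with `θ = m / K²` (`K` a Lipschitz constant of `T`) this map is a
contraction with constant `√(1 - (m/K)²)`, so Banach's fixed-point theorem applies.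
-/

open scoped RealInnerProductSpace

section

variable {H : Type*} [NormedAddCommGroup H] [InnerProductSpace ℝ H]

def IsStronglyMonotone (m : ℝ) (T : H → H) : Prop :=
  ∀ u v, m * ‖u - v‖ ^ 2 ≤ ⟪T u - T v, u - v⟫

namespace IsStronglyMonotone

variable {m : ℝ} {T : H → H}

theorem mul_norm_sub_le (hT : IsStronglyMonotone m T) (u v : H) :
    m * ‖u - v‖ ≤ ‖T u - T v‖ := by
  rcases (norm_nonneg (u - v)).eq_or_lt with huv | huv
  · rw [← huv, mul_zero]
    exact norm_nonneg _
  · have h : m * ‖u - v‖ * ‖u - v‖ ≤ ‖T u - T v‖ * ‖u - v‖ :=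
      calc m * ‖u - v‖ * ‖u - v‖ = m * ‖u - v‖ ^ 2 := by ring
        _ ≤ ⟪T u - T v, u - v⟫ := hT u v
        _ ≤ ‖T u - T v‖ * ‖u - v‖ := real_inner_le_norm _ _
    exact le_of_mul_le_mul_right h huv

theorem injective (hT : IsStronglyMonotone m T) (hm : 0 < m) : Function.Injective T := by
  intro u v huv
  have h := hT.mul_norm_sub_le u v
  rw [huv, sub_self, norm_zero] at h
  exact sub_eq_zero.mp (norm_eq_zero.mp (le_antisymm (nonpos_of_mul_nonpos_right h hm)
    (norm_nonneg _)))

theorem norm_sub_smul_sub_sq_le (hT : IsStronglyMonotone m T) {K : NNReal}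
    (hLip : LipschitzWith K T) {θ : ℝ} (hθ : 0 ≤ θ) (x y : H) :
    ‖(x - θ • T x) - (y - θ • T y)‖ ^ 2 ≤ (1 - 2 * θ * m + θ ^ 2 * K ^ 2) * ‖x - y‖ ^ 2 := by
  have hdiff : (x - θ • T x) - (y - θ • T y) = (x - y) - θ • (T x - T y) := by module
  have hLip' : ‖T x - T y‖ ≤ K * ‖x - y‖ := by
    simpa only [dist_eq_norm] using hLip.dist_le_mul x y
  have hLip_sq : ‖T x - T y‖ ^ 2 ≤ K ^ 2 * ‖x - y‖ ^ 2 := by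
    rw [← mul_pow]
    exact pow_le_pow_left₀ (norm_nonneg _) hLip' 2
  rw [hdiff, norm_sub_sq_real, real_inner_smul_right, real_inner_comm, norm_smul,
    Real.norm_of_nonneg hθ]
  nlinarith [mul_le_mul_of_nonneg_left (hT x y) hθ,
    mul_le_mul_of_nonneg_left hLip_sq (sq_nonneg θ)]

theorem contractingWith (hT : IsStronglyMonotone m T) (hm : 0 < m) {K : NNReal}
    (hLip : LipschitzWith K T) (hmK : m ≤ K) (y : H) :
    ContractingWith ⟨√(1 - (m / K) ^ 2), Real.sqrt_nonneg _⟩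
      (fun x ↦ x - (m / K ^ 2) • (T x - y)) := by
  have hK : (0 : ℝ) < K := hm.trans_le hmK
  have hθ : 0 ≤ m / (K : ℝ) ^ 2 := by positivity
  have hconst : 1 - 2 * (m / K ^ 2) * m + (m / K ^ 2) ^ 2 * K ^ 2 = 1 - (m / K) ^ 2 := by
    field_simp
    ring
  refine ⟨?_, LipschitzWith.of_dist_le_mul fun x x' ↦ ?_⟩
  · change √(1 - (m / K) ^ 2) < 1
    rw [Real.sqrt_lt' one_pos]
    have : 0 < (m / K) ^ 2 := by positivity
    linarith
  · have hsq := hT.norm_sub_smul_sub_sq_le hLip hθ x x'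
    rw [hconst] at hsq
    have hdiff : (x - (m / K ^ 2) • (T x - y)) - (x' - (m / K ^ 2) • (T x' - y)) =
        (x - (m / K ^ 2) • T x) - (x' - (m / K ^ 2) • T x') := by module
    simp only [dist_eq_norm, hdiff]
    calc _ = √(‖(x - (m / K ^ 2) • T x) - (x' - (m / K ^ 2) • T x')‖ ^ 2) :=
          (Real.sqrt_sq (norm_nonneg _)).symm
      _ ≤ √((1 - (m / K) ^ 2) * ‖x - x'‖ ^ 2) := Real.sqrt_le_sqrt hsq
      _ = √(1 - (m / K) ^ 2) * ‖x - x'‖ := by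
          rw [Real.sqrt_mul' _ (sq_nonneg _), Real.sqrt_sq (norm_nonneg _)]

theorem surjective [CompleteSpace H] (hT : IsStronglyMonotone m T) (hm : 0 < m) {L : NNReal}
    (hLip : LipschitzWith L T) : Function.Surjective T := by
  intro y
  -- Enlarging the Lipschitz constant to `L + m` makes it at least `m`.
  set K : NNReal := L + ⟨m, hm.le⟩
  have hmK : m ≤ K := by
    change m ≤ (L : ℝ) + m
    linarith [L.coe_nonneg]
  have hF := hT.contractingWith hm (hLip.weaken le_self_add) hmK y
  have : Nonempty H := ⟨y⟩
  set x := ContractingWith.fixedPoint _ hF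
  have hx : x - (m / K ^ 2) • (T x - y) = x := ContractingWith.fixedPoint_isFixedPt hF
  have hθ : m / (K : ℝ) ^ 2 ≠ 0 := (div_pos hm (pow_pos (hm.trans_le hmK) 2)).ne'
  rw [sub_eq_self, smul_eq_zero, or_iff_right hθ, sub_eq_zero] at hx
  exact ⟨x, hx⟩

end IsStronglyMonotone

end

theorem stmt_6 {H : Type*} [NormedAddCommGroup H] [InnerProductSpace ℝ H] [CompleteSpace H]
    (T : H → H) (L : NNReal) (m : ℝ) (hm : 0 < m) (hLip : LipschitzWith L T)
    (hmono : ∀ u v : H, m * ‖u - v‖ ^ 2 ≤ (inner ℝ (T u - T v) (u - v) : ℝ)) :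
    Function.Bijective T ∧
      ∀ u v : H, ‖Function.invFun T u - Function.invFun T v‖ ≤ (1 / m) * ‖u - v‖ := by
  have hT : IsStronglyMonotone m T := hmono
  have hsurj := hT.surjective hm hLip
  refine ⟨⟨hT.injective hm, hsurj⟩, fun u v ↦ ?_⟩
  have h := hT.mul_norm_sub_le (Function.invFun T u) (Function.invFun T v)
  rw [Function.rightInverse_invFun hsurj u, Function.rightInverse_invFun hsurj v] at h
  rw [one_div_mul_eq_div, le_div_iff₀ hm, mul_comm]
  exact h
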